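/- arXiv:1306.3726 — 3 statements merged into one kernel-verified Lean document; each statement's English description precedes it below -/
import Mathlib

section
/- Let Σ = {0,1,2} and let f be the function with f(ε) = ε and f(x₁x₂…x_{k−1}x_k) = x_k x₂…x_{k−1} x₁ for every non-empty word (exchanging the first and last symbol). Then every deterministic position-faithful one-tape Turing machine computing f has, for each n ≥ 2, some input x of length n on which its runtime is at least 2·|x|. -/
open Classical

/-- A set of strings is regular iff it is accepted by a deterministic finite automaton. -/
def IsRegularLang {γ : Type} (P : Set (List γ)) : Prop :=
  ∃ (Q : Type) (_ : Fintype Q) (M : DFA γ Q), ∀ w, w ∈ M.accepts ↔ w ∈ P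

/-- The convolution of two strings, padding the shorter one with `none` (the symbol □). -/
def convP {α β : Type} (x : List α) (y : List β) : List (Option α × Option β) :=
  (List.range (max x.length y.length)).map fun i => (x[i]?, y[i]?)

/-- Convolution padded with `(none, none)` up to a prescribed length `L`
(this is the convolution of `x·□^*` and `y·□^*`, both padded to length `L`). -/
def convPad {α β : Type} (x : List α) (y : List β) (L : ℕ) : List (Option α × Option β) :=
  (List.range L).map fun i => (x[i]?, y[i]?)

/-- The convolution of three strings. -/
def conv3 {α β γ : Type} (x : List α) (y : List β) (z : List γ) :
    List (Option α × Option β × Option γ) :=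
  (List.range (max x.length (max y.length z.length))).map fun i =>
    (x[i]?, y[i]?, z[i]?)

/-- The convolution of four strings. -/
def conv4 {α β γ δ : Type} (a : List α) (b : List β) (c : List γ) (d : List δ) :
    List (Option α × Option β × Option γ × Option δ) :=
  (List.range (max (max a.length b.length) (max c.length d.length))).map fun i =>
    (a[i]?, b[i]?, (c)[i]?, d[i]?)

/-- A partial function on strings is automatic iff its graph of convolutions is regular. -/
def IsAutomatic {α β : Type} (f : List α → Option (List β)) : Prop :=
  IsRegularLang { w | ∃ x y, f x = some y ∧ w = convP x y }

/-- Tape symbols: the left-end marker ⊞, the blank □, or an alphabet symbol. -/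
inductive TSym (Γ : Type) : Type
  | lend : TSym Γ
  | blank : TSym Γ
  | sym : Γ → TSym Γ

/-- Head movement: `true` = one cell to the right, `false` = one cell to the left
(capped at cell 0). -/
def tmove (b : Bool) (h : ℕ) : ℕ := if b then h + 1 else h - 1

/-- The tape holding ⊞ w □ □ ⋯ -/
def listTape {Γ : Type} (w : List Γ) : ℕ → TSym Γ
  | 0 => TSym.lend
  | n + 1 =>
    match w[n]? with
    | some a => TSym.sym a
    | none => TSym.blank

/-- The tape `t` starts with ⊞ w □ (the content beyond the first blank is unconstrained). -/
def TapeStartsWith {Γ : Type} (t : ℕ → TSym Γ) (w : List Γ) : Prop :=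
  t 0 = TSym.lend ∧ (∀ i : Fin w.length, t (i.1 + 1) = TSym.sym (w.get i)) ∧
    t (w.length + 1) = TSym.blank

/-- A configuration of a one-tape Turing machine. -/
structure TMConfig (Q Γ : Type) where
  state : Q
  head : ℕ
  tape : ℕ → TSym Γ

/-- A deterministic position-faithful one-tape Turing machine with input alphabet `α`,
output alphabet `β` and (finite) working alphabet `Γ` into which both embed.  The
left-end marker ⊞ occurs exactly at cell 0: it can never be modified (the head moves
right on reading it) and it is never written elsewhere. -/
structure DPFTM (α β Γ : Type) where
  Q : Type
  finQ : Fintype Q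
  finΓ : Fintype Γ
  inputEmb : α → Γ
  outputEmb : β → Γ
  inputInj : Function.Injective inputEmb
  outputInj : Function.Injective outputEmb
  init : Q
  accept : Q
  reject : Q
  δ : Q → TSym Γ → Q × TSym Γ × Bool
  faithful_end : ∀ q, (δ q TSym.lend).2.1 = TSym.lend ∧ (δ q TSym.lend).2.2 = true
  faithful_noend : ∀ q a, a ≠ TSym.lend → (δ q a).2.1 ≠ TSym.lend

namespace DPFTM

def step {α β Γ : Type} (M : DPFTM α β Γ) (c : TMConfig M.Q Γ) : TMConfig M.Q Γ :=
  ⟨(M.δ c.state (c.tape c.head)).1,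
   tmove (M.δ c.state (c.tape c.head)).2.2 c.head,
   Function.update c.tape c.head (M.δ c.state (c.tape c.head)).2.1⟩

/-- The initial configuration on input `x`: tape ⊞ x □ □ ⋯, head on ⊞. -/
def initConfig {α β Γ : Type} (M : DPFTM α β Γ) (x : List α) : TMConfig M.Q Γ :=
  ⟨M.init, 0, listTape (x.map M.inputEmb)⟩

/-- The configuration after `n` steps on input `x`. -/
def conf {α β Γ : Type} (M : DPFTM α β Γ) (x : List α) (n : ℕ) : TMConfig M.Q Γ :=
  M.step^[n] (M.initConfig x)

/-- The machine has halted (in the accepting or in the rejecting state). -/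
def Halted {α β Γ : Type} (M : DPFTM α β Γ) (c : TMConfig M.Q Γ) : Prop :=
  c.state = M.accept ∨ c.state = M.reject

/-- On input `x` the machine halts, accepting, after exactly `n` steps. -/
def HaltsAcceptAt {α β Γ : Type} (M : DPFTM α β Γ) (x : List α) (n : ℕ) : Prop :=
  (M.conf x n).state = M.accept ∧ ∀ m < n, ¬ M.Halted (M.conf x m)

/-- `M` computes the partial function `f`: for every `x`, `f x = some y` iff `M`,
started on ⊞ x □ □ ⋯, eventually halts in the accepting state with tape content
starting with ⊞ y □. -/
def Computes {α β Γ : Type} (M : DPFTM α β Γ) (f : List α → Option (List β)) : Prop :=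
  ∀ x y, f x = some y ↔
    ∃ n, M.HaltsAcceptAt x n ∧ TapeStartsWith (M.conf x n).tape (y.map M.outputEmb)

/-- There is a constant `c` such that on every input `x` the computation lasts at most
`c·(|x|+1)` steps. -/
def LinearTime {α β Γ : Type} (M : DPFTM α β Γ) : Prop :=
  ∃ c : ℕ, ∀ x : List α, ∃ n ≤ c * (x.length + 1), M.Halted (M.conf x n)

end DPFTM

/-- A non-deterministic position-faithful one-tape Turing machine. -/
structure NPFTM (α β Γ : Type) where
  Q : Type
  finQ : Fintype Q
  finΓ : Fintype Γ
  inputEmb : α → Γ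
  outputEmb : β → Γ
  inputInj : Function.Injective inputEmb
  outputInj : Function.Injective outputEmb
  init : Q
  accept : Q
  reject : Q
  δ : Q → TSym Γ → Set (Q × TSym Γ × Bool)
  faithful_end : ∀ q t, t ∈ δ q TSym.lend → t.2.1 = TSym.lend ∧ t.2.2 = true
  faithful_noend : ∀ q a t, a ≠ TSym.lend → t ∈ δ q a → t.2.1 ≠ TSym.lend

namespace NPFTM

/-- The one-step relation between configurations. -/
def StepRel {α β Γ : Type} (M : NPFTM α β Γ) (c c' : TMConfig M.Q Γ) : Prop :=
  ∃ t ∈ M.δ c.state (c.tape c.head),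
    c' = ⟨t.1, tmove t.2.2 c.head, Function.update c.tape c.head t.2.1⟩

def initConfig {α β Γ : Type} (M : NPFTM α β Γ) (x : List α) : TMConfig M.Q Γ :=
  ⟨M.init, 0, listTape (x.map M.inputEmb)⟩

def Halted {α β Γ : Type} (M : NPFTM α β Γ) (c : TMConfig M.Q Γ) : Prop :=
  c.state = M.accept ∨ c.state = M.reject

/-- `p` is a computation (run) of length `n` of `M` on input `x`: it starts in the
initial configuration, performs `n` steps, and does not halt before step `n`. -/
def IsRun {α β Γ : Type} (M : NPFTM α β Γ) (x : List α) (p : ℕ → TMConfig M.Q Γ)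
    (n : ℕ) : Prop :=
  p 0 = M.initConfig x ∧ ∀ i < n, ¬ M.Halted (p i) ∧ M.StepRel (p i) (p (i + 1))

/-- `M` computes the partial function `f`: `f x = some y` iff some computation of `M`
on `x` halts accepting with tape content starting ⊞ y □.  (In particular any two
accepting computations on the same input produce the same output.) -/
def Computes {α β Γ : Type} (M : NPFTM α β Γ) (f : List α → Option (List β)) : Prop :=
  ∀ x y, f x = some y ↔
    ∃ (p : ℕ → TMConfig M.Q Γ) (n : ℕ), M.IsRun x p n ∧ (p n).state = M.accept ∧
      TapeStartsWith (p n).tape (y.map M.outputEmb)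

/-- Every computation (accepting or not) on input `x` lasts at most `c·(|x|+1)` steps. -/
def LinearTime {α β Γ : Type} (M : NPFTM α β Γ) : Prop :=
  ∃ c : ℕ, ∀ (x : List α) (p : ℕ → TMConfig M.Q Γ) (n : ℕ),
    M.IsRun x p n → n ≤ c * (x.length + 1)

end NPFTM

/-- The length of the longest datum among `T 0, …, T n`. -/
def maxLen {σ : Type} (T : ℕ → List σ) (n : ℕ) : ℕ :=
  (Finset.range (n + 1)).sup fun i => (T i).length

/-- `T` is a text for the language `Lang`: it enumerates exactly the elements of `Lang`. -/
def IsTextFor {σ : Type} (T : ℕ → List σ) (Lang : Set (List σ)) : Prop :=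
  Set.range T = Lang

/-- An automatic family of (nonempty) languages over the alphabet `σ`, indexed by a
regular set of strings over the alphabet `ι`. -/
structure AutoFam (ι σ : Type) [Fintype ι] [Fintype σ] where
  Idx : Set (List ι)
  L : List ι → Set (List σ)
  regIdx : IsRegularLang Idx
  regFam : IsRegularLang { w | ∃ e x, e ∈ Idx ∧ x ∈ L e ∧ w = convP e x }
  nonemptyL : ∀ e ∈ Idx, (L e).Nonempty

/-- An abstract learner: it maps (old memory, new datum) to (new memory, conjecture),
starting from a fixed initial memory. -/
structure PLearner (σ μ ι : Type) where
  minit : List μ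
  lstep : List μ → List σ → List μ × List ι

namespace PLearner

/-- The memory of the learner after having processed `T 0, …, T (n-1)`. -/
def mem {σ μ ι : Type} (M : PLearner σ μ ι) (T : ℕ → List σ) : ℕ → List μ
  | 0 => M.minit
  | n + 1 => (M.lstep (PLearner.mem M T n) (T n)).1

/-- The conjecture of the learner after having processed `T 0, …, T n`. -/
def hyp {σ μ ι : Type} (M : PLearner σ μ ι) (T : ℕ → List σ) (n : ℕ) : List ι :=
  (M.lstep (M.mem T n) (T n)).2

/-- The learner is automatic: the graph of its update function, as a set of
convolutions, is regular. -/
def Automatic {σ μ ι : Type} [Fintype σ] [Fintype μ] [Fintype ι]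
    (M : PLearner σ μ ι) : Prop :=
  IsRegularLang { w | ∃ om dat, w = conv4 om dat (M.lstep om dat).1 (M.lstep om dat).2 }

/-- The memory of the learner is bounded in length by the length of the longest datum
seen so far plus a constant. -/
def MemBounded {σ μ ι : Type} (M : PLearner σ μ ι) : Prop :=
  ∃ c : ℕ, ∀ (T : ℕ → List σ) (n : ℕ), (M.mem T (n + 1)).length ≤ maxLen T n + c

/-- The learner learns the family `(Idx, L)`: on every text for some `L e₀` with
`e₀ ∈ Idx`, its conjectures converge to a fixed index `e ∈ Idx` with `L e = L e₀`. -/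
def Learns {σ μ ι : Type} (M : PLearner σ μ ι)
    (Idx : Set (List ι)) (L : List ι → Set (List σ)) : Prop :=
  ∀ e₀ ∈ Idx, ∀ T : ℕ → List σ, IsTextFor T (L e₀) →
    ∃ e ∈ Idx, L e = L e₀ ∧ ∃ N, ∀ n ≥ N, M.hyp T n = e

end PLearner

/-- An unrestricted learner whose long-term memory is an arbitrary natural number. -/
structure RecLearner (σ ι : Type) where
  minit : ℕ
  lstep : ℕ × List σ → ℕ × List ι

namespace RecLearner

def mem {σ ι : Type} (M : RecLearner σ ι) (T : ℕ → List σ) : ℕ → ℕ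
  | 0 => M.minit
  | n + 1 => (M.lstep (RecLearner.mem M T n, T n)).1

def hyp {σ ι : Type} (M : RecLearner σ ι) (T : ℕ → List σ) (n : ℕ) : List ι :=
  (M.lstep (M.mem T n, T n)).2

/-- The learner is recursive: its update function is computable. -/
def Recursive {σ ι : Type} [Primcodable σ] [Primcodable ι] (M : RecLearner σ ι) : Prop :=
  Computable M.lstep

def Learns {σ ι : Type} (M : RecLearner σ ι)
    (Idx : Set (List ι)) (L : List ι → Set (List σ)) : Prop :=
  ∀ e₀ ∈ Idx, ∀ T : ℕ → List σ, IsTextFor T (L e₀) →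
    ∃ e ∈ Idx, L e = L e₀ ∧ ∃ N, ∀ n ≥ N, M.hyp T n = e

end RecLearner

/-- The function exchanging the first and the last symbol of a word. -/
def swapFL {σ : Type} : List σ → List σ
  | [] => []
  | [a] => [a]
  | a :: b :: rest =>
    (b :: rest).getLast (List.cons_ne_nil b rest) :: ((b :: rest).dropLast ++ [a])

/-! On the inputs `b l a`, the last cell initially holds `a` and must finally hold `b`.
If the head never reached it, the runs for two different values of `a` would coincide
and leave different symbols there; so the head reaches the last cell, at some time
`t ≥ |x|`. Up to time `t` the runs for all `a` coincide, so for a suitable `a` the first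
cell, which must finally hold `a`, still holds something else at time `t`, and the head
needs at least `|x| - 1` more steps to get back there and rewrite it. -/

namespace TMConfig

def AgreeOff {Q Γ : Type} (k : ℕ) (c c' : TMConfig Q Γ) : Prop :=
  c.state = c'.state ∧ c.head = c'.head ∧ ∀ i, i ≠ k → c.tape i = c'.tape i

end TMConfig

lemma listTape_append_singleton_length {γ : Type} (w : List γ) (a : γ) :
    listTape (w ++ [a]) (w.length + 1) = TSym.sym a := by
  simp [listTape]

lemma listTape_append_singleton_of_ne {γ : Type} (w : List γ) (a a' : γ) {i : ℕ}
    (hi : i ≠ w.length + 1) : listTape (w ++ [a]) i = listTape (w ++ [a']) i := by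
  rcases i with _ | i
  · rfl
  · have hget : (w ++ [a])[i]? = (w ++ [a'])[i]? := by
      rcases Nat.lt_or_gt_of_ne (show i ≠ w.length by omega) with h | h
      · simp [List.getElem?_append_left h]
      · simp [h]
    simp only [listTape, hget]

lemma TapeStartsWith.apply_succ {Γ : Type} {t : ℕ → TSym Γ} {w : List Γ}
    (h : TapeStartsWith t w) (j : ℕ) (hj : j < w.length) : t (j + 1) = TSym.sym w[j] :=
  h.2.1 ⟨j, hj⟩

lemma swapFL_cons_append_singleton {σ : Type} (a b : σ) (l : List σ) :
    swapFL (a :: (l ++ [b])) = b :: (l ++ [a]) := by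
  cases l with
  | nil => rfl
  | cons c l =>
    simp only [List.cons_append, swapFL]
    simp only [← List.cons_append, List.dropLast_concat, List.getLast_concat]

lemma TSym.exists_sym_ne {β Γ : Type} [Nontrivial β] {e : β → Γ} (he : e.Injective)
    (s : TSym Γ) : ∃ a, TSym.sym (e a) ≠ s := by
  by_contra! h
  obtain ⟨a₀, a₁, hne⟩ := exists_pair_ne β
  exact hne (he (TSym.sym.inj ((h a₀).trans (h a₁).symm)))

namespace DPFTM

section

variable {α β Γ : Type} (M : DPFTM α β Γ)

lemma conf_succ (x : List α) (t : ℕ) : M.conf x (t + 1) = M.step (M.conf x t) :=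
  Function.iterate_succ_apply' _ _ _

lemma head_step_le (c : TMConfig M.Q Γ) : (M.step c).head ≤ c.head + 1 := by
  unfold step tmove; dsimp only; split <;> omega

lemma head_le_head_step_add_one (c : TMConfig M.Q Γ) : c.head ≤ (M.step c).head + 1 := by
  unfold step tmove; dsimp only; split <;> omega

lemma tape_step_of_ne (c : TMConfig M.Q Γ) {k : ℕ} (hk : k ≠ c.head) :
    (M.step c).tape k = c.tape k :=
  Function.update_of_ne hk _ _

lemma head_conf_le (x : List α) (t : ℕ) : (M.conf x t).head ≤ t := by
  induction t with
  | zero => rfl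
  | succ t ih =>
    rw [conf_succ]
    exact (M.head_step_le _).trans (by omega)

lemma head_conf_le_add (x : List α) {u v : ℕ} (huv : u ≤ v) :
    (M.conf x u).head ≤ (M.conf x v).head + (v - u) := by
  induction v, huv using Nat.le_induction with
  | base => simp
  | succ v huv ih =>
    have := M.head_le_head_step_add_one (M.conf x v)
    rw [conf_succ]
    omega

lemma tape_conf_of_forall_head_ne (x : List α) {k u v : ℕ} (huv : u ≤ v)
    (h : ∀ s, u ≤ s → s < v → (M.conf x s).head ≠ k) :
    (M.conf x v).tape k = (M.conf x u).tape k := by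
  induction v, huv using Nat.le_induction with
  | base => rfl
  | succ v huv ih =>
    rw [conf_succ, M.tape_step_of_ne _ (h v huv v.lt_succ_self).symm]
    exact ih fun s hu hs => h s hu (by omega)

lemma exists_head_eq_of_tape_ne (x : List α) {k u v : ℕ} (huv : u ≤ v)
    (h : (M.conf x v).tape k ≠ (M.conf x u).tape k) :
    ∃ s, u ≤ s ∧ s < v ∧ (M.conf x s).head = k := by
  by_contra! hne
  exact h (M.tape_conf_of_forall_head_ne x huv hne)

lemma step_agreeOff {k : ℕ} {c c' : TMConfig M.Q Γ} (h : c.AgreeOff k c')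
    (hk : c.head ≠ k) : (M.step c).AgreeOff k (M.step c') := by
  obtain ⟨hq, hh, ht⟩ := h
  have hread : c.tape c.head = c'.tape c'.head := hh ▸ ht _ hk
  unfold step
  rw [hread, hq, hh]
  refine ⟨rfl, rfl, fun i hi => ?_⟩
  simp only [Function.update_apply]
  split_ifs
  · rfl
  · exact ht i hi

lemma conf_agreeOff {x x' : List α} {k t : ℕ}
    (h0 : (M.initConfig x).AgreeOff k (M.initConfig x'))
    (h : ∀ s < t, (M.conf x s).head ≠ k) : (M.conf x t).AgreeOff k (M.conf x' t) := by
  induction t with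
  | zero => exact h0
  | succ t ih =>
    rw [conf_succ, conf_succ]
    exact M.step_agreeOff (ih fun s hs => h s (by omega)) (h t (by omega))

lemma halted_iff_of_agreeOff {k : ℕ} {c c' : TMConfig M.Q Γ} (h : c.AgreeOff k c') :
    M.Halted c ↔ M.Halted c' := by
  unfold Halted; rw [h.1]

lemma eq_of_haltsAcceptAt {x : List α} {n m : ℕ} (hn : M.HaltsAcceptAt x n)
    (hm : M.Halted (M.conf x m)) (hmin : ∀ j < m, ¬ M.Halted (M.conf x j)) : m = n := by
  by_contra hne
  rcases Nat.lt_or_gt_of_ne hne with hlt | hlt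
  · exact hn.2 m hlt hm
  · exact hmin n hlt (Or.inl hn.1)

lemma head_lt_add_of_tape_ne (x : List α) {i u v : ℕ} (huv : u ≤ v)
    (h : (M.conf x v).tape i ≠ (M.conf x u).tape i) :
    (M.conf x u).head < i + (v - u) := by
  obtain ⟨s, hus, hsv, hs⟩ := M.exists_head_eq_of_tape_ne x huv h
  have := M.head_conf_le_add x hus
  omega

lemma initConfig_append_singleton_agreeOff (w : List α) (a a' : α) :
    (M.initConfig (w ++ [a])).AgreeOff (w.length + 1) (M.initConfig (w ++ [a'])) := by
  refine ⟨rfl, rfl, fun i hi => ?_⟩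
  simp only [initConfig, List.map_append, List.map_singleton]
  exact listTape_append_singleton_of_ne _ _ _ (by simpa using hi)

lemma initConfig_append_singleton_tape (w : List α) (a : α) :
    (M.initConfig (w ++ [a])).tape (w.length + 1) = TSym.sym (M.inputEmb a) := by
  simpa [initConfig] using listTape_append_singleton_length (w.map M.inputEmb) (M.inputEmb a)

end

section SwapFL

variable {α Γ : Type} {M : DPFTM α α Γ}

lemma exists_haltsAcceptAt_swapFL (hM : M.Computes fun x => some (swapFL x))
    (b a : α) (l : List α) :
    ∃ n, M.HaltsAcceptAt (b :: (l ++ [a])) n ∧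
      (M.conf (b :: (l ++ [a])) n).tape 1 = TSym.sym (M.outputEmb a) ∧
      (M.conf (b :: (l ++ [a])) n).tape (l.length + 2) = TSym.sym (M.outputEmb b) := by
  obtain ⟨n, hn, hout⟩ :=
    (hM (b :: (l ++ [a])) _).mp (congrArg some (swapFL_cons_append_singleton b a l))
  refine ⟨n, hn, ?_, ?_⟩
  · simpa using hout.apply_succ 0 (by simp)
  · simpa using hout.apply_succ (l.length + 1) (by simp)

lemma exists_head_eq_last_of_haltsAcceptAt [Nontrivial α]
    (hM : M.Computes fun x => some (swapFL x)) (b a : α) (l : List α) {n : ℕ}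
    (hn : M.HaltsAcceptAt (b :: (l ++ [a])) n)
    (hlast : (M.conf (b :: (l ++ [a])) n).tape (l.length + 2) = TSym.sym (M.outputEmb b)) :
    ∃ s < n, (M.conf (b :: (l ++ [a])) s).head = l.length + 2 := by
  by_contra! hvis
  obtain ⟨a', ha'⟩ := exists_ne a
  obtain ⟨n', hn', -, hlast'⟩ := exists_haltsAcceptAt_swapFL hM b a' l
  have hag : ∀ t ≤ n, (M.conf (b :: (l ++ [a])) t).AgreeOff (l.length + 2)
      (M.conf (b :: (l ++ [a'])) t) := fun t ht =>
    M.conf_agreeOff (M.initConfig_append_singleton_agreeOff (b :: l) a a')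
      fun s hs => hvis s (by omega)
  have hnn' : n = n' := M.eq_of_haltsAcceptAt hn'
    ((M.halted_iff_of_agreeOff (hag n le_rfl)).mp (Or.inl hn.1))
    fun j hj => (M.halted_iff_of_agreeOff (hag j hj.le)).not.mp (hn.2 j hj)
  subst hnn'
  have hkeep := M.tape_conf_of_forall_head_ne (b :: (l ++ [a])) (k := l.length + 2) n.zero_le
    fun s _ hs => hvis s hs
  have hkeep' := M.tape_conf_of_forall_head_ne (b :: (l ++ [a'])) (k := l.length + 2) n.zero_le
    fun s _ hs => (hag s hs.le).2.1 ▸ hvis s hs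
  have hsym : TSym.sym (M.inputEmb a) = TSym.sym (M.inputEmb a') := calc
    _ = (M.conf (b :: (l ++ [a])) 0).tape (l.length + 2) :=
      (M.initConfig_append_singleton_tape (b :: l) a).symm
    _ = TSym.sym (M.outputEmb b) := hkeep.symm.trans hlast
    _ = (M.conf (b :: (l ++ [a'])) 0).tape (l.length + 2) := hlast'.symm.trans hkeep'
    _ = TSym.sym (M.inputEmb a') := M.initConfig_append_singleton_tape (b :: l) a'
  exact ha' (M.inputInj (TSym.sym.inj hsym)).symm

theorem exists_two_mul_length_le_runtime_swapFL [Nontrivial α]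
    (hM : M.Computes fun x => some (swapFL x)) (b : α) (l : List α) :
    ∃ a, ∀ m, M.Halted (M.conf (b :: (l ++ [a])) m) →
      (∀ j < m, ¬ M.Halted (M.conf (b :: (l ++ [a])) j)) → 2 * (l.length + 2) ≤ m := by
  obtain ⟨n₀, hn₀, -, hlast₀⟩ := exists_haltsAcceptAt_swapFL hM b b l
  have hvisit := exists_head_eq_last_of_haltsAcceptAt hM b b l hn₀ hlast₀
  have hbefore : ∀ s < Nat.find hvisit, _ := fun s hs => Nat.find_min hvisit hs
  obtain ⟨htn₀, hthead⟩ := Nat.find_spec hvisit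
  generalize Nat.find hvisit = t at htn₀ hthead hbefore
  have hfirst : ∀ s < t, (M.conf (b :: (l ++ [b])) s).head ≠ l.length + 2 :=
    fun s hs h => hbefore s hs ⟨hs.trans htn₀, h⟩
  obtain ⟨a, ha⟩ := TSym.exists_sym_ne M.outputInj ((M.conf (b :: (l ++ [b])) t).tape 1)
  refine ⟨a, fun m hm hmin => ?_⟩
  obtain ⟨n, hn, hcell₁, -⟩ := exists_haltsAcceptAt_swapFL hM b a l
  have hag : ∀ s ≤ t, (M.conf (b :: (l ++ [b])) s).AgreeOff (l.length + 2)
      (M.conf (b :: (l ++ [a])) s) := fun s hs =>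
    M.conf_agreeOff (M.initConfig_append_singleton_agreeOff (b :: l) b a)
      fun r hr => hfirst r (by omega)
  have htn : t < n := by
    by_contra! hnt
    exact hn₀.2 n (by omega) ((M.halted_iff_of_agreeOff (hag n hnt)).mpr (Or.inl hn.1))
  have hreturn : (M.conf (b :: (l ++ [a])) t).head < 1 + (n - t) :=
    M.head_lt_add_of_tape_ne _ htn.le <| by
      rw [hcell₁, ← (hag t le_rfl).2.2 1 (by omega)]
      exact ha
  have hheadt := (hag t le_rfl).2.1 ▸ hthead
  have htime := M.head_conf_le (b :: (l ++ [b])) t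
  rw [M.eq_of_haltsAcceptAt hn hm hmin]
  omega

end SwapFL

end DPFTM

/-- every deterministic position-faithful one-tape Turing machine
computing the first-last-exchange function over `Σ = {0,1,2}` has, for each `n ≥ 2`,
some input `x` of length `n` on which its runtime is at least `2·|x|`. -/
theorem stmt4 {Γ : Type} (M : DPFTM (Fin 3) (Fin 3) Γ)
    (hco : M.Computes fun x => some (swapFL x)) :
    ∀ n, 2 ≤ n → ∃ x : List (Fin 3), x.length = n ∧
      ∀ m, M.Halted (M.conf x m) → (∀ j < m, ¬ M.Halted (M.conf x j)) →
        2 * x.length ≤ m := by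
  intro n hn
  obtain ⟨a, ha⟩ :=
    DPFTM.exists_two_mul_length_le_runtime_swapFL hco 0 (List.replicate (n - 2) 0)
  have hlen : (0 :: (List.replicate (n - 2) 0 ++ [a])).length = n := by simp; omega
  refine ⟨_, hlen, fun m hm hmin => ?_⟩
  have := ha m hm hmin
  rw [List.length_replicate] at this
  omega
end

section
/- The automatic family of all strings of length different from the index, given by I = {0}* and L_e = {x ∈ Σ* : |x| ≠ |e|}, is learnable by an automatic learner whose memory is bounded in length by the length of the longest datum seen so far plus a constant; such a learner can maintain as memory a binary string whose k-th bit records whether an example of length k has been seen, and conjecture 0^h for the least h such that no example of length h has been seen. -/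
open Classical

/-! On a text for `{x | x.length ≠ m}` let `m₀` be the least length that never occurs. The
lengths below `m₀` all occur, at finitely many times, so the least length not seen so far is
eventually `m₀`. And `0^m₀` indexes the same language: `m₀ ≤ m`, and if `m₀ < m` then no
string has length `m`, as its prefix of length `m₀` would occur in the text.

The graph of the update function, read as a language of convolutions, is local: a word belongs
to it iff each letter satisfies a condition relative to its predecessor and the last letter a
final condition. The old memory and the datum are padded only at the end, a new memory bit is
the old one or "the datum ends here", and the conjecture track runs as long as all memory bits
so far are `true`. A local language is recognised by the automaton remembering the last
letter read. -/

section LocalLanguage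

variable {α : Type}

def prevLetter (w : List α) (k : ℕ) : Option α := if k = 0 then none else w[k - 1]?

theorem prevLetter_length (w : List α) : prevLetter w w.length = w.getLast? := by
  rw [prevLetter, List.getLast?_eq_getElem?]
  split_ifs with h <;> simp [h]

theorem prevLetter_append_singleton {w : List α} {k : ℕ} (hk : k ≤ w.length) (a : α) :
    prevLetter (w ++ [a]) k = prevLetter w k := by
  unfold prevLetter
  split_ifs
  · rfl
  · exact List.getElem?_append_left (by omega)

variable (R : Option α → α → Prop) (Q : α → Prop)

def LocalLang : Set (List α) :=
  {w | (∀ k (hk : k < w.length), R (prevLetter w k) w[k]) ∧ ∃ a ∈ w.getLast?, Q a}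

theorem forall_prevLetter_append_singleton (w : List α) (a : α) :
    (∀ k (hk : k < (w ++ [a]).length), R (prevLetter (w ++ [a]) k) (w ++ [a])[k]) ↔
      (∀ k (hk : k < w.length), R (prevLetter w k) w[k]) ∧ R w.getLast? a := by
  simp only [List.length_append, List.length_singleton, Nat.forall_lt_succ_right']
  refine and_congr (forall_congr' fun k => forall_congr' fun hk => ?_) ?_
  · rw [prevLetter_append_singleton hk.le, List.getElem_append_left hk]
  · rw [prevLetter_append_singleton le_rfl, prevLetter_length, List.getElem_append_right le_rfl]
    simp

/-- The state `some p` records the last letter read (`p = none` before the first one);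
`none` is the rejecting sink. -/
noncomputable def localDFA : DFA α (Option (Option α)) where
  step s a := s.bind fun p => if R p a then some (some a) else none
  start := some none
  accept := {s | ∃ a, s = some (some a) ∧ Q a}

theorem localDFA_eval (w : List α) :
    (localDFA R Q).eval w =
      if ∀ k (hk : k < w.length), R (prevLetter w k) w[k] then some w.getLast? else none := by
  induction w using List.reverseRecOn with
  | nil => simp [localDFA, DFA.eval]
  | append_singleton w a ih =>
    simp only [DFA.eval_append_singleton, ih, forall_prevLetter_append_singleton]
    by_cases h : ∀ k (hk : k < w.length), R (prevLetter w k) w[k] <;> simp [h, localDFA]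

theorem isRegularLang_localLang [Fintype α] : IsRegularLang (LocalLang R Q) :=
  ⟨_, inferInstance, localDFA R Q, fun w => by
    rw [DFA.mem_accepts, localDFA_eval, LocalLang]
    split_ifs with h <;> simp [localDFA, h]⟩

end LocalLanguage

theorem Nat.forall_le_add_one_iff {p : ℕ → Prop} {k : ℕ} :
    (∀ j ≤ k + 1, p j) ↔ (∀ j ≤ k, p j) ∧ p (k + 1) :=
  ⟨fun h => ⟨fun j hj => h j (by omega), h _ le_rfl⟩,
    fun ⟨h, hk⟩ j hj => (Nat.le_succ_iff.1 hj).elim (h j) (fun e => e ▸ hk)⟩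

theorem Option.eq_ite_of_isSome_iff {d : Option Unit} {p : Prop} [Decidable p]
    (h : d.isSome ↔ p) : d = if p then some () else none := by
  cases d <;> simp_all

theorem List.isNone_getElem?_zero {α : Type} (l : List α) :
    l[0]?.isNone = decide (0 = l.length) := by
  cases l <;> rfl

theorem List.isNone_and_isSome_getElem? {α : Type} (l : List α) (k : ℕ) :
    (l[k + 1]?.isNone && l[k]?.isSome) = decide (k + 1 = l.length) := by
  by_cases h : k + 1 = l.length <;> simp [h] <;> omega

theorem List.exists_getElem_eq_getElem? {β : Type} (l : List (Option β))
    (hnone : ∀ k (hk : k + 1 < l.length), l[k] = none → l[k + 1] = none) :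
    ∃ xs : List β, xs.length ≤ l.length ∧ ∀ k (hk : k < l.length), l[k] = xs[k]? := by
  induction l with
  | nil => exact ⟨[], le_rfl, fun k hk => absurd hk (Nat.not_lt_zero k)⟩
  | cons a l ih =>
    cases a with
    | none =>
      refine ⟨[], Nat.zero_le _, fun k hk => ?_⟩
      induction k with
      | zero => rfl
      | succ k ihk => exact hnone k hk (ihk (by omega))
    | some x =>
      obtain ⟨xs, hlen, hxs⟩ := ih fun k hk => hnone (k + 1) (by simpa using hk)
      refine ⟨x :: xs, by simpa using hlen, fun k hk => ?_⟩
      cases k with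
      | zero => rfl
      | succ k => exact hxs k (by simpa using hk)

theorem maxLen_zero {σ : Type} (T : ℕ → List σ) : maxLen T 0 = (T 0).length := by
  simp [maxLen]

theorem maxLen_succ {σ : Type} (T : ℕ → List σ) (n : ℕ) :
    maxLen T (n + 1) = max (maxLen T n) (T (n + 1)).length := by
  simp [maxLen, Finset.range_add_one, Finset.sup_insert, max_comm]

theorem IsTextFor.mem {σ : Type} {T : ℕ → List σ} {L : Set (List σ)} (hT : IsTextFor T L)
    (i : ℕ) : T i ∈ L :=
  hT ▸ Set.mem_range_self i

theorem eventually_sInf_missed_eq (f : ℕ → ℕ) (hf : {h | ∀ i, f i ≠ h}.Nonempty) :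
    ∀ᶠ n in Filter.atTop, sInf {h | ∀ i ≤ n, f i ≠ h} = sInf {h | ∀ i, f i ≠ h} := by
  set m := sInf {h | ∀ i, f i ≠ h}
  have hit : ∀ h ∈ Set.Iio m, ∀ᶠ n in Filter.atTop, ∃ i ≤ n, f i = h := fun h hh => by
    obtain ⟨i, hi⟩ : ∃ i, f i = h := by simpa using Nat.notMem_of_lt_sInf hh
    exact Filter.eventually_atTop.2 ⟨i, fun n hn => ⟨i, hn, hi⟩⟩
  filter_upwards [(Set.finite_Iio m).eventually_all.2 hit] with n hn
  refine IsLeast.csInf_eq ⟨fun i _ => Nat.sInf_mem hf i, fun h hh => ?_⟩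
  by_contra hlt
  obtain ⟨i, hi, rfl⟩ := hn h (not_le.1 hlt)
  exact hh i hi rfl

theorem setOf_length_ne_sInf_eq {σ : Type} {T : ℕ → List σ} {m : ℕ}
    (hT : IsTextFor T {x | x.length ≠ m}) :
    {x : List σ | x.length ≠ sInf {h | ∀ i, (T i).length ≠ h}} = {x | x.length ≠ m} := by
  have hm : m ∈ {h | ∀ i, (T i).length ≠ h} := hT.mem
  set m₀ := sInf {h | ∀ i, (T i).length ≠ h}
  have hm₀ : ∀ i, (T i).length ≠ m₀ := Nat.sInf_mem ⟨m, hm⟩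
  have hmiss : ∀ x : List σ, x.length = m₀ → x.length = m := fun x hx => by
    by_contra hne
    obtain ⟨i, rfl⟩ : x ∈ Set.range T := hT ▸ hne
    exact hm₀ i hx
  ext x
  refine not_congr ⟨hmiss x, fun hx => ?_⟩
  by_contra hne
  have hlt : m₀ < x.length := lt_of_le_of_ne (hx ▸ Nat.sInf_le hm) (Ne.symm hne)
  have := hmiss _ (List.length_take_of_le hlt.le)
  rw [List.length_take_of_le hlt.le] at this
  omega

namespace SeenLengths

def bit (om : List Bool) (ℓ k : ℕ) : Bool := om[k]?.getD false || decide (k = ℓ)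

def record (om : List Bool) (ℓ : ℕ) : List Bool :=
  (List.range (max om.length (ℓ + 1))).map (bit om ℓ)

noncomputable def firstFalse (l : List Bool) : ℕ := sInf {k | l[k]?.getD false = false}

noncomputable def learner (σ : Type) : PLearner σ Bool Unit where
  minit := []
  lstep om dat := (record om dat.length, List.replicate (firstFalse (record om dat.length)) ())

@[simp]
theorem length_record (om : List Bool) (ℓ : ℕ) :
    (record om ℓ).length = max om.length (ℓ + 1) := by
  simp [record]

theorem getElem?_record {om : List Bool} {ℓ k : ℕ} (hk : k < max om.length (ℓ + 1)) :
    (record om ℓ)[k]? = some (bit om ℓ k) := by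
  simp [record, hk]

theorem getD_record (om : List Bool) (ℓ k : ℕ) :
    (record om ℓ)[k]?.getD false = bit om ℓ k := by
  by_cases hk : k < max om.length (ℓ + 1)
  · simp [getElem?_record hk]
  · have hom : om[k]? = none := List.getElem?_eq_none (by omega)
    simp [record, bit, hom, show k ≠ ℓ by omega, hk]

theorem firstFalse_le_length (l : List Bool) : firstFalse l ≤ l.length :=
  Nat.sInf_le (by simp)

theorem lt_firstFalse_iff {l : List Bool} {k : ℕ} :
    k < firstFalse l ↔ ∀ j ≤ k, l[j]?.getD false = true := by
  refine ⟨fun h j hj => ?_, fun h => ?_⟩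
  · simpa using Nat.notMem_of_lt_sInf (s := {k | l[k]?.getD false = false}) (hj.trans_lt h)
  by_contra hle
  have hmem : l[firstFalse l]?.getD false = false :=
    Nat.sInf_mem (s := {k | l[k]?.getD false = false}) ⟨l.length, by simp⟩
  rw [h _ (not_lt.1 hle)] at hmem
  exact Bool.true_eq_false.mp hmem

section Specification

variable {σ : Type} (T : ℕ → List σ)

theorem getD_mem (n k : ℕ) :
    ((learner σ).mem T n)[k]?.getD false = decide (∃ i < n, (T i).length = k) := by
  induction n with
  | zero => simp [PLearner.mem, learner]
  | succ n ih =>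
    show (record ((learner σ).mem T n) (T n).length)[k]?.getD false = _
    rw [getD_record, bit, ih, ← Bool.decide_or]
    simp only [Nat.exists_lt_succ_right, eq_comm (a := k)]

theorem length_mem_succ (n : ℕ) : ((learner σ).mem T (n + 1)).length = maxLen T n + 1 := by
  induction n with
  | zero => simp [PLearner.mem, learner, maxLen_zero]
  | succ n ih =>
    simp only [PLearner.mem, learner, length_record] at ih ⊢
    rw [ih, maxLen_succ]
    omega

theorem mem_succ_eq (n : ℕ) : (learner σ).mem T (n + 1) = (List.range (maxLen T n + 1)).map
      (fun k => if ∃ i, i ≤ n ∧ (T i).length = k then true else false) := by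
  refine List.ext_getElem (by simp [length_mem_succ]) fun k hk _ => ?_
  have := getD_mem T (n + 1) k
  simp_all

theorem hyp_eq (n : ℕ) :
    (learner σ).hyp T n =
      List.replicate (sInf {h : ℕ | ∀ i ≤ n, (T i).length ≠ h}) () := by
  show List.replicate (firstFalse ((learner σ).mem T (n + 1))) () = _
  refine congrArg (fun h => List.replicate h ()) (congrArg sInf (Set.ext fun k => ?_))
  simp [getD_mem]

theorem learner_memBounded : (learner σ).MemBounded :=
  ⟨1, fun T n => (length_mem_succ T n).le⟩

theorem learner_learns :
    (learner σ).Learns Set.univ (fun e => {x : List σ | x.length ≠ e.length}) := by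
  intro e _ T hT
  obtain ⟨N, hN⟩ := Filter.eventually_atTop.1 <|
    eventually_sInf_missed_eq (fun i => (T i).length) ⟨e.length, hT.mem⟩
  refine ⟨List.replicate (sInf {h | ∀ i, (T i).length ≠ h}) (), Set.mem_univ _, ?_, N,
    fun n hn => by rw [hyp_eq, hN n hn]⟩
  simpa using setOf_length_ne_sInf_eq hT

end Specification

section Automatic

variable {σ : Type}

/-- A letter of `conv4 om dat nm c`: tracks of old memory, datum, new memory and conjecture. -/
abbrev Cell (σ : Type) := Option Bool × Option σ × Option Bool × Option Unit

def cell (om : List Bool) (dat : List σ) (k : ℕ) : Cell σ :=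
  (om[k]?, dat[k]?, some (bit om dat.length k),
    if ∀ j ≤ k, bit om dat.length j = true then some () else none)

theorem conv4_lstep (om : List Bool) (dat : List σ) :
    conv4 om dat ((learner σ).lstep om dat).1 ((learner σ).lstep om dat).2 =
      (List.range (max om.length (dat.length + 1))).map (cell om dat) := by
  show conv4 om dat (record om dat.length)
    (List.replicate (firstFalse (record om dat.length)) ()) = _
  have hle := firstFalse_le_length (record om dat.length)
  rw [length_record] at hle
  refine List.ext_getElem (by simp [conv4]; omega) fun k hk _ => ?_
  have hk' : k < max om.length (dat.length + 1) := by simp [conv4] at hk; omega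
  simp [conv4, cell, getElem?_record hk', lt_firstFalse_iff, getD_record,
    List.getElem?_replicate]

def Consistent : Option (Cell σ) → Cell σ → Prop
  | none, x => x.2.2.1 = some (x.1.getD false || x.2.1.isNone) ∧
      (x.2.2.2.isSome ↔ x.2.2.1 = some true)
  | some p, x => (p.1 = none → x.1 = none) ∧ (p.2.1 = none → x.2.1 = none) ∧
      x.2.2.1 = some (x.1.getD false || (x.2.1.isNone && p.2.1.isSome)) ∧
      (x.2.2.2.isSome ↔ x.2.2.1 = some true ∧ p.2.2.2.isSome)

/-- Forces the length of the word to be `max om.length (dat.length + 1)`. -/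
def Final (x : Cell σ) : Prop := x.2.1 = none ∧ (x.1.isSome ∨ x.2.2.1 = some true)

theorem consistent_cell (om : List Bool) (dat : List σ) (k : ℕ) :
    Consistent (if k = 0 then none else some (cell om dat (k - 1))) (cell om dat k) := by
  rcases k with _ | k
  · simp [Consistent, cell, bit, List.isNone_getElem?_zero]
  · simp only [Nat.add_one_ne_zero, ↓reduceIte, Nat.add_sub_cancel, Consistent, cell]
    refine ⟨fun h => ?_, fun h => ?_, by rw [bit, List.isNone_and_isSome_getElem?], ?_⟩
    · exact List.getElem?_eq_none ((List.getElem?_eq_none_iff.1 h).trans k.le_succ)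
    · exact List.getElem?_eq_none ((List.getElem?_eq_none_iff.1 h).trans k.le_succ)
    · simp [Nat.forall_le_add_one_iff, and_comm]

theorem final_cell (om : List Bool) (dat : List σ) :
    Final (cell om dat (max om.length (dat.length + 1) - 1)) := by
  refine ⟨List.getElem?_eq_none (by omega), ?_⟩
  by_cases h : om.length ≤ dat.length
  · right
    simp [cell, bit, show max om.length (dat.length + 1) - 1 = dat.length by omega]
  · left
    simp [cell]
    omega

theorem map_cell_mem_localLang (om : List Bool) (dat : List σ) :
    (List.range (max om.length (dat.length + 1))).map (cell om dat) ∈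
      LocalLang Consistent Final := by
  refine ⟨fun k hk => ?_, ?_⟩
  · have := consistent_cell om dat k
    simp only [List.length_map, List.length_range] at hk
    rcases k with _ | k
    · simpa [prevLetter] using this
    · simpa [prevLetter, List.getElem?_range (Nat.lt_of_succ_lt hk)] using this
  · refine ⟨_, ?_, final_cell om dat⟩
    rw [List.getLast?_eq_getElem?, List.length_map, List.length_range, List.getElem?_map,
      List.getElem?_range (by omega)]
    rfl

theorem getElem_eq_cell {w : List (Cell σ)} (hfirst : ∀ hk : 0 < w.length, Consistent none w[0])
    (hstep : ∀ k (hk : k + 1 < w.length), Consistent (some w[k]) w[k + 1])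
    {om : List Bool} {dat : List σ} (hom : ∀ k (hk : k < w.length), w[k].1 = om[k]?)
    (hdat : ∀ k (hk : k < w.length), w[k].2.1 = dat[k]?) (k : ℕ) (hk : k < w.length) :
    w[k] = cell om dat k := by
  have hnm : ∀ k (hk : k < w.length), w[k].2.2.1 = some (bit om dat.length k) := by
    intro k hk
    cases k with
    | zero => rw [(hfirst hk).1, hom 0 hk, hdat 0 hk, bit, List.isNone_getElem?_zero]
    | succ k =>
      rw [(hstep k hk).2.2.1, hom _ hk, hdat _ hk, hdat k (by omega), bit,
        List.isNone_and_isSome_getElem?]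
  have hconj : w[k].2.2.2.isSome ↔ ∀ j ≤ k, bit om dat.length j = true := by
    induction k with
    | zero => rw [(hfirst hk).2, hnm]; simp
    | succ k ih =>
      rw [(hstep k hk).2.2.2, hnm, ih (by omega), Nat.forall_le_add_one_iff]
      simp [and_comm]
  rw [cell, ← hom k hk, ← hdat k hk, ← hnm k hk, ← Option.eq_ite_of_isSome_iff hconj]

theorem length_eq_of_final_cell {om : List Bool} {dat : List σ} {L : ℕ} (hL : 0 < L)
    (hom : om.length ≤ L) (hdat : dat.length ≤ L) (hfin : Final (cell om dat (L - 1))) :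
    L = max om.length (dat.length + 1) := by
  obtain ⟨hend, hlast⟩ := hfin
  rw [cell, List.getElem?_eq_none_iff] at hend
  have : L - 1 < om.length ∨ L - 1 = dat.length := by
    rcases hlast with h | h
    · exact Or.inl (by simpa [cell] using h)
    · simp only [cell, bit, Option.some.injEq, Bool.or_eq_true, decide_eq_true_eq] at h
      refine h.imp_left fun h => ?_
      by_contra hc
      simp [List.getElem?_eq_none (not_lt.1 hc)] at h
  omega

theorem exists_eq_map_cell {w : List (Cell σ)} (hw : w ∈ LocalLang Consistent Final) :
    ∃ (om : List Bool) (dat : List σ),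
      w = (List.range (max om.length (dat.length + 1))).map (cell om dat) := by
  obtain ⟨hcons, a, ha, hfin⟩ := hw
  have hfirst : ∀ hk : 0 < w.length, Consistent none w[0] := hcons 0
  have hstep : ∀ k (hk : k + 1 < w.length), Consistent (some w[k]) w[k + 1] := fun k hk => by
    simpa [prevLetter, List.getElem?_eq_getElem (Nat.lt_of_succ_lt hk)] using hcons (k + 1) hk
  obtain ⟨om, homlen, hom⟩ := List.exists_getElem_eq_getElem? (w.map (·.1))
    fun k hk h => by simpa using (hstep k (by simpa using hk)).1 (by simpa using h)
  obtain ⟨dat, hdatlen, hdat⟩ := List.exists_getElem_eq_getElem? (w.map (·.2.1))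
    fun k hk h => by simpa using (hstep k (by simpa using hk)).2.1 (by simpa using h)
  simp only [List.length_map, List.getElem_map] at homlen hom hdatlen hdat
  obtain ⟨hpos, rfl⟩ : ∃ h : w.length - 1 < w.length, w[w.length - 1] = a := by
    simpa [List.getLast?_eq_getElem?, List.getElem?_eq_some_iff] using ha
  rw [getElem_eq_cell hfirst hstep hom hdat _ hpos] at hfin
  have hlen := length_eq_of_final_cell (by omega) homlen hdatlen hfin
  refine ⟨om, dat, List.ext_getElem (by simp [← hlen]) fun k hk _ => ?_⟩
  simp only [List.getElem_map, List.getElem_range]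
  exact getElem_eq_cell hfirst hstep hom hdat k hk

theorem graph_eq_localLang :
    {w | ∃ om dat, w = conv4 om dat ((learner σ).lstep om dat).1 ((learner σ).lstep om dat).2} =
      LocalLang Consistent Final := by
  ext w
  constructor
  · rintro ⟨om, dat, rfl⟩
    rw [conv4_lstep]
    exact map_cell_mem_localLang om dat
  · intro hw
    obtain ⟨om, dat, rfl⟩ := exists_eq_map_cell hw
    exact ⟨om, dat, (conv4_lstep om dat).symm⟩

theorem learner_automatic [Fintype σ] : (learner σ).Automatic := by
  rw [PLearner.Automatic, graph_eq_localLang]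
  exact isRegularLang_localLang _ _

end Automatic

end SeenLengths

/-- the automatic family of all strings of length different from the index
(`I = {0}*`, `L_e = {x : |x| ≠ |e|}`) is learnable by an automatic learner whose memory
is bounded by the length of the longest datum seen so far plus a constant; the learner
maintains as memory a binary string whose `k`-th bit records whether an example of
length `k` has been seen, and conjectures `0^h` for the least `h` such that no example
of length `h` has been seen. -/
theorem stmt9 {σ : Type} [Fintype σ] :
    ∃ M : PLearner σ Bool Unit,
      M.Automatic ∧ M.MemBounded ∧
      M.Learns (Set.univ : Set (List Unit))
        (fun e => { x : List σ | x.length ≠ e.length }) ∧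
      ∀ (T : ℕ → List σ) (n : ℕ),
        M.mem T (n + 1) = (List.range (maxLen T n + 1)).map
          (fun k => if ∃ i, i ≤ n ∧ (T i).length = k then true else false) ∧
        M.hyp T n = List.replicate (sInf { h : ℕ | ∀ i ≤ n, (T i).length ≠ h }) () :=
  ⟨SeenLengths.learner σ, SeenLengths.learner_automatic, SeenLengths.learner_memBounded,
    SeenLengths.learner_learns,
    fun T n => ⟨SeenLengths.mem_succ_eq T n, SeenLengths.hyp_eq T n⟩⟩
end

section
/- Let Σ = {0,1,2} and let ℒ be the automatic family consisting of L_ε = {0,1}*, L_{x0} = ({0,1}* ∪ {x2}) − {x} and L_{x1} = {0,1}* ∪ {x2} for each x ∈ {0,1}*. Then no automatic learner learns ℒ. -/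
open Classical

/-- The set `{0,1}*` of binary strings inside `{0,1,2}*`. -/
def BSet : Set (List (Fin 3)) := { w | ∀ a ∈ w, a ≠ 2 }

/-- The index set `{ε} ∪ {x0 : x ∈ {0,1}*} ∪ {x1 : x ∈ {0,1}*}`. -/
def I10 : Set (List (Fin 3)) :=
  { e | e = [] ∨ ∃ x : List (Fin 3), (∀ a ∈ x, a ≠ 2) ∧
    (e = x ++ [(0 : Fin 3)] ∨ e = x ++ [(1 : Fin 3)]) }

/-- The family with `L_ε = {0,1}*`, `L_{x0} = ({0,1}* ∪ {x2}) − {x}` and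
`L_{x1} = {0,1}* ∪ {x2}`. -/
def Fam10 (e : List (Fin 3)) : Set (List (Fin 3)) :=
  if e = [] then BSet
  else if e.getLast? = some (0 : Fin 3) then
    (BSet ∪ {e.dropLast ++ [(2 : Fin 3)]}) \ {e.dropLast}
  else if e.getLast? = some (1 : Fin 3) then BSet ∪ {e.dropLast ++ [(2 : Fin 3)]}
  else ∅

/-!
An automatic learner's memory grows by at most a constant `q` per datum: if the new memory
were longer, a DFA for the graph of the learner could pump down a block lying beyond both the
old memory and the datum, producing a second, shorter graph entry with the same arguments.
So after `s` data of length at most `s + d` the memory has length `O(s + d)`, while there are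
`2 ^ (d * s)` sequences of `s` binary data, each carrying `d` free bits. By pigeonhole two
different prefixes lead to the same memory, and some binary word `x` occurs in the first but
not in the second. Continuing both with one text of `L_{x0} = ({0,1}* ∪ {x2}) − {x}` gives
texts of `L_{x1}` and `L_{x0}` on which the learner behaves identically from then on, so it
cannot converge to correct indices on both.
-/

namespace DFA

variable {α σ : Type} [Fintype σ]

theorem exists_deletable_infix_of_mem_accepts (M : DFA α σ) {w : List α} (hw : w ∈ M.accepts)
    {B : ℕ} (hB : B + Fintype.card σ ≤ w.length) :
    ∃ u b v, w = u ++ b ++ v ∧ B ≤ u.length ∧ b ≠ [] ∧ u ++ v ∈ M.accepts := by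
  obtain ⟨_, a, b, c, hsplit, -, hb, rfl, -, hc⟩ :=
    M.evalFrom_split (x := w.drop B) (s := M.eval (w.take B)) (by simp; omega) rfl
  refine ⟨w.take B ++ a, b, c, ?_, by simp; omega, hb, ?_⟩
  · rw [List.append_assoc _ a b, List.append_assoc, ← hsplit,
      List.take_append_drop]
  · rwa [DFA.mem_accepts, DFA.eval, evalFrom_of_append, evalFrom_of_append, ← DFA.eval, hc,
      DFA.eval, ← evalFrom_of_append, List.take_append_drop]

end DFA

section Conv4

variable {α β γ δ : Type}

theorem conv4_getElem?_bind_fst (a : List α) (b : List β) (c : List γ) (d : List δ) (p : ℕ) :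
    ((conv4 a b c d)[p]?).bind (·.1) = a[p]? := by
  by_cases hp : p < max (max a.length b.length) (max c.length d.length)
  · rw [conv4, List.getElem?_map, List.getElem?_range hp]; rfl
  · rw [List.getElem?_eq_none (by simpa [conv4] using hp), List.getElem?_eq_none (by omega)]
    rfl

theorem conv4_getElem?_bind_snd (a : List α) (b : List β) (c : List γ) (d : List δ) (p : ℕ) :
    ((conv4 a b c d)[p]?).bind (·.2.1) = b[p]? := by
  by_cases hp : p < max (max a.length b.length) (max c.length d.length)
  · rw [conv4, List.getElem?_map, List.getElem?_range hp]; rfl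
  · rw [List.getElem?_eq_none (by simpa [conv4] using hp), List.getElem?_eq_none (by omega)]
    rfl

end Conv4

theorem List.getElem?_bind_append_eq_of_length_le {α β : Type} {u b v : List α} {l : List β}
    {f : α → Option β} (h : ∀ p : ℕ, ((u ++ b ++ v)[p]?).bind f = l[p]?)
    (hl : l.length ≤ u.length) (p : ℕ) : ((u ++ v)[p]?).bind f = l[p]? := by
  by_cases hp : p < u.length
  · rw [← h p, List.getElem?_append_left hp, List.append_assoc,
      List.getElem?_append_left hp]
  · have := h (p + b.length)
    rw [List.getElem?_append_right (by simp; omega),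
      List.length_append, List.getElem?_eq_none (l := l) (i := p + b.length) (by omega)] at this
    rw [List.getElem?_append_right (by omega), List.getElem?_eq_none (l := l) (i := p) (by omega),
      ← this]
    congr 2
    omega

namespace PLearner

variable {σ μ ι : Type}

theorem Automatic.exists_length_lstep_fst_le [Fintype σ] [Fintype μ] [Fintype ι]
    {M : PLearner σ μ ι} (hM : M.Automatic) :
    ∃ q, ∀ om dat, (M.lstep om dat).1.length ≤ max om.length dat.length + q := by
  obtain ⟨Q, _, A, hA⟩ := hM
  refine ⟨Fintype.card Q, fun om dat => ?_⟩
  by_contra! hlong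
  set w := conv4 om dat (M.lstep om dat).1 (M.lstep om dat).2 with hw
  obtain ⟨u, b, v, hsplit, hu, hb, huv⟩ := A.exists_deletable_infix_of_mem_accepts
    ((hA w).2 ⟨om, dat, rfl⟩) (B := max om.length dat.length) (by simp [hw, conv4]; omega)
  obtain ⟨om', dat', huv'⟩ := (hA _).1 huv
  have hom : om' = om := List.ext_getElem? fun p => by
    rw [← conv4_getElem?_bind_fst om' dat' _ _ p, ← huv']
    refine List.getElem?_bind_append_eq_of_length_le (b := b) (fun p => ?_) (by omega) p
    rw [← hsplit, conv4_getElem?_bind_fst]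
  have hdat : dat' = dat := List.ext_getElem? fun p => by
    rw [← conv4_getElem?_bind_snd om' dat' _ _ p, ← huv']
    refine List.getElem?_bind_append_eq_of_length_le (b := b) (fun p => ?_) (by omega) p
    rw [← hsplit, conv4_getElem?_bind_snd]
  rw [hom, hdat, ← hw, hsplit] at huv'
  have := congrArg List.length huv'
  simp only [List.length_append] at this
  exact hb (List.length_eq_zero_iff.1 (by omega))

variable (M : PLearner σ μ ι)

theorem mem_congr {T T' : ℕ → List σ} {n : ℕ} (h : ∀ t < n, T t = T' t) :
    M.mem T n = M.mem T' n := by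
  induction n with
  | zero => rfl
  | succ n ih =>
    simp only [mem, ih fun t ht => h t (by omega), h n (by omega)]

theorem length_mem_le {q : ℕ}
    (hq : ∀ om dat, (M.lstep om dat).1.length ≤ max om.length dat.length + q)
    {T : ℕ → List σ} {B n : ℕ} (hT : ∀ t < n, (T t).length ≤ B) :
    (M.mem T n).length ≤ max M.minit.length B + q * n := by
  induction n with
  | zero => simp [mem]
  | succ n ih =>
    have hmem := ih fun t ht => hT t (by omega)
    have hdat := hT n (by omega)
    have := hq (M.mem T n) (T n)
    simp only [mem]
    rw [Nat.mul_succ]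
    omega

theorem hyp_eq_of_mem_eq {T T' : ℕ → List σ} {s : ℕ} (hmem : M.mem T s = M.mem T' s)
    (hT : ∀ t ≥ s, T t = T' t) : ∀ t ≥ s, M.hyp T t = M.hyp T' t := by
  have hmem_add : ∀ k, M.mem T (s + k) = M.mem T' (s + k) := by
    intro k
    induction k with
    | zero => exact hmem
    | succ k ih => rw [← Nat.add_assoc, mem, mem, ih, hT (s + k) (by omega)]
  intro t ht
  obtain ⟨k, rfl⟩ := Nat.exists_eq_add_of_le ht
  simp only [hyp, hmem_add, hT (s + k) ht]

theorem Learns.lang_eq_of_hyp_eq {M : PLearner σ μ ι} {Idx : Set (List ι)}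
    {L : List ι → Set (List σ)} (hM : M.Learns Idx L) {e₁ e₂ : List ι}
    (he₁ : e₁ ∈ Idx) (he₂ : e₂ ∈ Idx) {T₁ T₂ : ℕ → List σ} (hT₁ : IsTextFor T₁ (L e₁))
    (hT₂ : IsTextFor T₂ (L e₂)) {s : ℕ} (h : ∀ t ≥ s, M.hyp T₁ t = M.hyp T₂ t) :
    L e₁ = L e₂ := by
  obtain ⟨c₁, -, hc₁, N₁, hN₁⟩ := hM e₁ he₁ T₁ hT₁
  obtain ⟨c₂, -, hc₂, N₂, hN₂⟩ := hM e₂ he₂ T₂ hT₂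
  set n := max s (max N₁ N₂)
  rw [← hc₁, ← hc₂, ← hN₁ n (by omega), ← hN₂ n (by omega), h n (by omega)]

end PLearner

theorem Fintype.exists_ne_map_eq_of_length_le {α μ : Type} [Fintype α] [Fintype μ]
    (f : α → List μ) {L : ℕ} (hf : ∀ a, (f a).length ≤ L)
    (hcard : (Fintype.card μ + 1) ^ L < Fintype.card α) : ∃ a b, a ≠ b ∧ f a = f b := by
  obtain ⟨a, b, hab, h⟩ := Fintype.exists_ne_map_eq_of_card_lt
    (fun a (p : Fin L) => (f a)[p.1]?) (by simpa using hcard)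
  refine ⟨a, b, hab, List.ext_getElem? fun p => ?_⟩
  by_cases hp : p < L
  · exact congrFun h ⟨p, hp⟩
  · rw [List.getElem?_eq_none (by have := hf a; omega),
      List.getElem?_eq_none (by have := hf b; omega)]

-- The block `0^t 1` records the position `t`, so the data of such a prefix determine it.
def codeWord {d : ℕ} (t : ℕ) (v : Fin d → Fin 2) : List (Fin 3) :=
  List.replicate t 0 ++ 1 :: List.ofFn fun j => (v j).castSucc

theorem length_codeWord {d : ℕ} (t : ℕ) (v : Fin d → Fin 2) :
    (codeWord t v).length = t + 1 + d := by
  simp [codeWord]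
  omega

theorem codeWord_mem_BSet {d : ℕ} (t : ℕ) (v : Fin d → Fin 2) : codeWord t v ∈ BSet := by
  intro a ha
  simp only [codeWord, List.mem_append, List.mem_replicate, List.mem_cons, List.mem_ofFn] at ha
  rcases ha with ⟨-, rfl⟩ | rfl | ⟨j, rfl⟩
  · decide
  · decide
  · exact (Fin.castSucc_lt_last (v j)).ne

theorem codeWord_inj {d t t' : ℕ} {v v' : Fin d → Fin 2} :
    codeWord t v = codeWord t' v' ↔ t = t' ∧ v = v' := by
  refine ⟨fun h => ?_, by rintro ⟨rfl, rfl⟩; rfl⟩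
  obtain rfl : t = t' := by simpa [length_codeWord] using congrArg List.length h
  simp only [codeWord, List.append_cancel_left_eq, List.cons.injEq, List.ofFn_inj, true_and] at h
  exact ⟨rfl, funext fun j => Fin.castSucc_injective _ (congrFun h j)⟩

theorem PLearner.exists_binary_prefixes_mem_eq {μ ι : Type} [Fintype μ]
    (M : PLearner (Fin 3) μ ι) {q : ℕ}
    (hq : ∀ om dat, (M.lstep om dat).1.length ≤ max om.length dat.length + q) :
    ∃ (s : ℕ) (P P' : ℕ → List (Fin 3)) (x : List (Fin 3)), M.mem P s = M.mem P' s ∧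
      P '' Set.Iio s ⊆ BSet ∧ P' '' Set.Iio s ⊆ BSet \ {x} ∧ x ∈ P '' Set.Iio s := by
  set K := Fintype.card μ + 1
  set m₀ := M.minit.length
  set s := K + 1
  set d := K * (m₀ + s + q * s) + 1
  set L := m₀ + s + d + q * s
  -- `s` and `d` are chosen so that `K * L + 1 = d * s`: there are more prefixes than memories.
  let P : (Fin s → Fin d → Fin 2) → ℕ → List (Fin 3) := fun g t =>
    if h : t < s then codeWord t (g ⟨t, h⟩) else []
  have hlen (g) : (M.mem (P g) s).length ≤ L := by
    have := M.length_mem_le hq (T := P g) (B := s + d) (n := s) fun t ht => by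
      simp only [P, dif_pos ht, length_codeWord]
      omega
    omega
  have hcard : K ^ L < Fintype.card (Fin s → Fin d → Fin 2) := by
    have hKL : K * L + 1 = d * s := by simp only [L, d, s]; ring
    simp only [Fintype.card_fun, Fintype.card_fin]
    calc K ^ L ≤ (2 ^ K) ^ L := Nat.pow_le_pow_left Nat.lt_two_pow_self.le _
      _ = 2 ^ (K * L) := (pow_mul _ _ _).symm
      _ < 2 ^ (d * s) := Nat.pow_lt_pow_right one_lt_two (by omega)
      _ = (2 ^ d) ^ s := pow_mul _ _ _
  obtain ⟨g, g', hne, hmem⟩ :=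
    Fintype.exists_ne_map_eq_of_length_le (fun g => M.mem (P g) s) hlen hcard
  obtain ⟨i, hi⟩ := Function.ne_iff.1 hne
  refine ⟨s, P g, P g', codeWord i (g i), hmem, ?_, ?_, ⟨i, i.2, by simp [P]⟩⟩
  · rintro _ ⟨t, ht, rfl⟩
    simp only [Set.mem_Iio] at ht
    simp only [P, dif_pos ht]
    exact codeWord_mem_BSet _ _
  · rintro _ ⟨t, ht, rfl⟩
    simp only [Set.mem_Iio] at ht
    simp only [P, dif_pos ht]
    refine ⟨codeWord_mem_BSet _ _, fun h => hi ?_⟩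
    obtain ⟨rfl, h⟩ := codeWord_inj.1 h
    exact h.symm

section Splice

variable {α : Type}

def splice (s : ℕ) (P T : ℕ → α) (t : ℕ) : α :=
  if t < s then P t else T (t - s)

theorem splice_of_lt {s t : ℕ} (P T : ℕ → α) (ht : t < s) : splice s P T t = P t :=
  if_pos ht

theorem splice_of_le {s t : ℕ} (P T : ℕ → α) (ht : s ≤ t) : splice s P T t = T (t - s) :=
  if_neg (Nat.not_lt.2 ht)

theorem range_splice (s : ℕ) (P T : ℕ → α) :
    Set.range (splice s P T) = P '' Set.Iio s ∪ Set.range T := by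
  apply Set.Subset.antisymm
  · rintro _ ⟨t, rfl⟩
    by_cases ht : t < s
    · exact Or.inl ⟨t, ht, (splice_of_lt P T ht).symm⟩
    · exact Or.inr ⟨t - s, (splice_of_le P T (Nat.le_of_not_lt ht)).symm⟩
  · rintro _ (⟨t, ht, rfl⟩ | ⟨t, rfl⟩)
    · exact ⟨t, splice_of_lt P T ht⟩
    · exact ⟨t + s, by rw [splice_of_le P T (Nat.le_add_left s t), Nat.add_sub_cancel]⟩

end Splice

theorem Fam10_append_zero (x : List (Fin 3)) :
    Fam10 (x ++ [0]) = (BSet ∪ {x ++ [2]}) \ {x} := by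
  simp [Fam10]

theorem Fam10_append_one (x : List (Fin 3)) : Fam10 (x ++ [1]) = BSet ∪ {x ++ [2]} := by
  simp [Fam10]

/-- no automatic learner learns the family ℒ consisting of
`L_ε = {0,1}*`, `L_{x0} = ({0,1}* ∪ {x2}) − {x}` and `L_{x1} = {0,1}* ∪ {x2}`. -/
theorem stmt10 :
    ¬ ∃ (μ : Type) (_ : Fintype μ) (M : PLearner (Fin 3) μ (Fin 3)),
        M.Automatic ∧ M.Learns I10 Fam10 := by
  rintro ⟨μ, _, M, hAuto, hLearn⟩
  obtain ⟨q, hq⟩ := hAuto.exists_length_lstep_fst_le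
  obtain ⟨s, P, P', x, hmem, hP, hP', hxP⟩ := M.exists_binary_prefixes_mem_eq hq
  have hx : x ∈ BSet := hP hxP
  obtain ⟨T, hT⟩ := (Set.to_countable (Fam10 (x ++ [0]))).exists_eq_range
    ⟨x ++ [2], by simp [Fam10_append_zero]⟩
  have hT₁ : IsTextFor (splice s P T) (Fam10 (x ++ [1])) := by
    rw [IsTextFor, range_splice, ← hT, Fam10_append_zero, Fam10_append_one]
    refine Set.Subset.antisymm
      (Set.union_subset (hP.trans Set.subset_union_left) Set.sdiff_subset) fun w hw => ?_
    by_cases hwx : w = x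
    · exact Or.inl (hwx ▸ hxP)
    · exact Or.inr ⟨hw, hwx⟩
  have hT₂ : IsTextFor (splice s P' T) (Fam10 (x ++ [0])) := by
    rw [IsTextFor, range_splice, ← hT, Set.union_eq_right, Fam10_append_zero]
    exact hP'.trans (Set.sdiff_subset_sdiff_left Set.subset_union_left)
  have hsame : ∀ t ≥ s, M.hyp (splice s P T) t = M.hyp (splice s P' T) t :=
    M.hyp_eq_of_mem_eq
      (by rwa [M.mem_congr fun t => splice_of_lt P T, M.mem_congr fun t => splice_of_lt P' T])
      fun t ht => by rw [splice_of_le P T ht, splice_of_le P' T ht]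
  have hFam := hLearn.lang_eq_of_hyp_eq (Or.inr ⟨x, hx, Or.inr rfl⟩)
    (Or.inr ⟨x, hx, Or.inl rfl⟩) hT₁ hT₂ hsame
  have hx₀ : x ∈ Fam10 (x ++ [0]) := hFam ▸ by rw [Fam10_append_one]; exact Or.inl hx
  simp [Fam10_append_zero] at hx₀
end
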